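/- Normalization of the logical fragment: If · ⊢^L a : A, then there exists a value v such that a ⇝* v. -/

import Mathlib

/-- Consistency classifiers: the logical (L) and programmatic (P) fragments. -/
inductive Frag : Type
  | L | P
deriving DecidableEq, Repr

/-- Types, with de Bruijn type variables for recursive types. -/
inductive Ty : Type
  | unit : Ty
  | arrow : Ty → Frag → Ty → Ty       -- A →^θ B
  | sum : Ty → Ty → Ty                -- A + B
  | at_ : Ty → Frag → Ty              -- A @ θ
  | tvar : ℕ → Ty                     -- α
  | mu : Ty → Ty                      -- μα. A  (binds one type variable)
deriving DecidableEq, Repr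

namespace Ty

def size : Ty → ℕ
  | unit => 1
  | arrow A _ B => A.size + B.size + 1
  | sum A B => A.size + B.size + 1
  | at_ A _ => A.size + 1
  | tvar _ => 1
  | mu A => A.size + 1

def rename (ρ : ℕ → ℕ) : Ty → Ty
  | unit => unit
  | arrow A θ B => arrow (A.rename ρ) θ (B.rename ρ)
  | sum A B => sum (A.rename ρ) (B.rename ρ)
  | at_ A θ => at_ (A.rename ρ) θ
  | tvar n => tvar (ρ n)
  | mu A => mu (A.rename (fun n => match n with | 0 => 0 | n+1 => ρ n + 1))

def subst (σ : ℕ → Ty) : Ty → Ty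
  | unit => unit
  | arrow A θ B => arrow (A.subst σ) θ (B.subst σ)
  | sum A B => sum (A.subst σ) (B.subst σ)
  | at_ A θ => at_ (A.subst σ) θ
  | tvar n => σ n
  | mu A => mu (A.subst (fun n => match n with | 0 => tvar 0 | n+1 => (σ n).rename Nat.succ))

end Ty

/-- [B/α]A : substitute B for the outermost type variable of A. -/
def tsubst0 (B A : Ty) : Ty := A.subst (fun n => match n with | 0 => B | n+1 => .tvar n)

/-- Terms, with de Bruijn term variables.  `lam` binds one variable (x);
    `rec` binds two: index 0 is x, index 1 is f.  `unbox` and the branches of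
    `case` bind one variable. -/
inductive Tm : Type
  | var : ℕ → Tm
  | lam : Tm → Tm                     -- λx. a
  | recc : Tm → Tm                     -- rec f x. a
  | app : Tm → Tm → Tm
  | box : Tm → Tm
  | unbox : Tm → Tm → Tm              -- unbox x = a in b
  | unit : Tm
  | inl : Tm → Tm
  | inr : Tm → Tm
  | case : Tm → Tm → Tm → Tm          -- case a of {inl x ⇒ b1 ; inr x ⇒ b2}
  | roll : Tm → Tm
  | unroll : Tm → Tm
deriving DecidableEq, Repr

namespace Tm

def liftR (ρ : ℕ → ℕ) : ℕ → ℕ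
  | 0 => 0
  | n+1 => ρ n + 1

def rename (ρ : ℕ → ℕ) : Tm → Tm
  | var n => var (ρ n)
  | lam a => lam (a.rename (liftR ρ))
  | recc a => recc (a.rename (liftR (liftR ρ)))
  | app a b => app (a.rename ρ) (b.rename ρ)
  | box a => box (a.rename ρ)
  | unbox a b => unbox (a.rename ρ) (b.rename (liftR ρ))
  | unit => unit
  | inl a => inl (a.rename ρ)
  | inr a => inr (a.rename ρ)
  | case a b c => case (a.rename ρ) (b.rename (liftR ρ)) (c.rename (liftR ρ))
  | roll a => roll (a.rename ρ)
  | unroll a => unroll (a.rename ρ)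

def liftS (σ : ℕ → Tm) : ℕ → Tm
  | 0 => var 0
  | n+1 => (σ n).rename Nat.succ

def subst (σ : ℕ → Tm) : Tm → Tm
  | var n => σ n
  | lam a => lam (a.subst (liftS σ))
  | recc a => recc (a.subst (liftS (liftS σ)))
  | app a b => app (a.subst σ) (b.subst σ)
  | box a => box (a.subst σ)
  | unbox a b => unbox (a.subst σ) (b.subst (liftS σ))
  | unit => unit
  | inl a => inl (a.subst σ)
  | inr a => inr (a.subst σ)
  | case a b c => case (a.subst σ) (b.subst (liftS σ)) (c.subst (liftS σ))
  | roll a => roll (a.subst σ)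
  | unroll a => unroll (a.subst σ)

end Tm

/-- [v/x]a : substitute v for the outermost term variable of a. -/
def subst1 (a v : Tm) : Tm := a.subst (fun n => match n with | 0 => v | n+1 => .var n)

/-- [v/x][w/f]a : substitute v for index 0 (x) and w for index 1 (f) in a. -/
def subst2 (a v w : Tm) : Tm :=
  a.subst (fun n => match n with | 0 => v | 1 => w | n+2 => .var n)

/-- Values. -/
inductive IsValue : Tm → Prop
  | var (n : ℕ) : IsValue (.var n)
  | unit : IsValue .unit
  | inl {v} : IsValue v → IsValue (.inl v)
  | inr {v} : IsValue v → IsValue (.inr v)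
  | lam (a : Tm) : IsValue (.lam a)
  | recc (a : Tm) : IsValue (.recc a)
  | box {v} : IsValue v → IsValue (.box v)
  | roll {v} : IsValue v → IsValue (.roll v)

/-- First-order types. -/
inductive FO : Ty → Prop
  | unit : FO .unit
  | sum {A B} : FO A → FO B → FO (.sum A B)
  | at_ (A : Ty) (θ : Frag) : FO (.at_ A θ)

/-- Typing contexts: each variable is tagged with a fragment. -/
abbrev Ctx := List (Frag × Ty)

/-- The typing judgement Γ ⊢^θ a : A. -/
inductive Typing : Ctx → Frag → Tm → Ty → Prop
  | tvar {Γ θ A n} : Γ[n]? = some (θ, A) → Typing Γ θ (.var n) A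
  | tlam {Γ θ' A B a} :
      Typing ((θ', A) :: Γ) .L a B →
      Typing Γ .L (.lam a) (.arrow A θ' B)
  | trec {Γ θ' A B a} :
      Typing ((θ', A) :: (.P, .arrow A θ' B) :: Γ) .P a B →
      Typing Γ .P (.recc a) (.arrow A θ' B)
  | tboxP {Γ θ a A} :
      Typing Γ θ a A → Typing Γ .P (.box a) (.at_ A θ)
  | tboxL {Γ θ a A} :
      Typing Γ .L a A → Typing Γ .L (.box a) (.at_ A θ)
  | tboxLV {Γ v A} :
      IsValue v → Typing Γ .P v A → Typing Γ .L (.box v) (.at_ A .P)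
  | tunbox {Γ θ θ' a b A B} :
      Typing Γ θ a (.at_ A θ') →
      Typing ((θ', A) :: Γ) θ b B →
      Typing Γ θ (.unbox a b) B
  | tapp {Γ θ θ' a b A B} :
      Typing Γ θ a (.arrow A θ' B) →
      Typing Γ θ (.box b) (.at_ A θ') →
      Typing Γ θ (.app a b) B
  | tunit {Γ θ} : Typing Γ θ .unit .unit
  | tsub {Γ a A} : Typing Γ .L a A → Typing Γ .P a A
  | tfoval {Γ v A} :
      IsValue v → FO A → Typing Γ .P v A → Typing Γ .L v A
  | tinl {Γ θ a A B} : Typing Γ θ a A → Typing Γ θ (.inl a) (.sum A B)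
  | tinr {Γ θ a A B} : Typing Γ θ a B → Typing Γ θ (.inr a) (.sum A B)
  | tcase {Γ θ θ' a b1 b2 A B C} :
      Typing Γ θ (.box a) (.at_ (.sum A B) θ') →
      Typing ((θ', A) :: Γ) θ b1 C →
      Typing ((θ', B) :: Γ) θ b2 C →
      Typing Γ θ (.case a b1 b2) C
  | troll {Γ a A} :
      Typing Γ .P a (tsubst0 (.mu A) A) →
      Typing Γ .P (.roll a) (.mu A)
  | tunroll {Γ a A} :
      Typing Γ .P a (.mu A) →
      Typing Γ .P (.unroll a) (tsubst0 (.mu A) A)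

/-- Call-by-value small-step reduction a ⇝ b. -/
inductive Step : Tm → Tm → Prop
  | beta {a v} : IsValue v → Step (.app (.lam a) v) (subst1 a v)
  | betaRec {a v} : IsValue v → Step (.app (.recc a) v) (subst2 a v (.recc a))
  | unbox {v b} : IsValue v → Step (.unbox (.box v) b) (subst1 b v)
  | caseL {v b1 b2} : IsValue v → Step (.case (.inl v) b1 b2) (subst1 b1 v)
  | caseR {v b1 b2} : IsValue v → Step (.case (.inr v) b1 b2) (subst1 b2 v)
  | unroll {v} : IsValue v → Step (.unroll (.roll v)) v
  | app1 {a a' b} : Step a a' → Step (.app a b) (.app a' b)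
  | app2 {v b b'} : IsValue v → Step b b' → Step (.app v b) (.app v b')
  | inl {a a'} : Step a a' → Step (.inl a) (.inl a')
  | inr {a a'} : Step a a' → Step (.inr a) (.inr a')
  | caseCtx {a a' b1 b2} : Step a a' → Step (.case a b1 b2) (.case a' b1 b2)
  | box {a a'} : Step a a' → Step (.box a) (.box a')
  | unbox1 {a a' b} : Step a a' → Step (.unbox a b) (.unbox a' b)
  | roll {a a'} : Step a a' → Step (.roll a) (.roll a')
  | unrollCtx {a a'} : Step a a' → Step (.unroll a) (.unroll a')

/-- Indexed multi-step reduction a ⇝^n b. -/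
inductive StepN : ℕ → Tm → Tm → Prop
  | refl (a : Tm) : StepN 0 a a
  | step {n a b c} : Step a b → StepN n b c → StepN (n+1) a c

/-- Multi-step reduction a ⇝* b. -/
inductive StepStar : Tm → Tm → Prop
  | refl (a : Tm) : StepStar a a
  | step {a b c} : Step a b → StepStar b c → StepStar a c

/-- The step-indexed value interpretation V[[A]]^θ_k.
    (The computational interpretation C[[·]] is inlined in the function-type
    and recursive-type cases; see `Cint` below.) -/
def Vint (k : ℕ) (θ : Frag) (A : Ty) : Set Tm :=
  match A, θ with
  | .unit, _ => {Tm.unit}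
  | .sum A B, θ =>
      {t | (∃ v, t = Tm.inl v ∧ v ∈ Vint k θ A) ∨ (∃ v, t = Tm.inr v ∧ v ∈ Vint k θ B)}
  | .at_ A θ', _ => {t | ∃ v, t = Tm.box v ∧ v ∈ Vint k θ' A}
  | .arrow A θ' B, .L =>
      {t | ∃ a, t = Tm.lam a ∧ Typing [] .L (Tm.lam a) (.arrow A θ' B) ∧
        ∀ j, j ≤ k → ∀ v, v ∈ Vint j θ' A →
          Typing [] .L (subst1 a v) B ∧
          ∃ w, StepStar (subst1 a v) w ∧ IsValue w ∧ w ∈ Vint j .L B}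
  | .arrow A θ' B, .P =>
      {t | ∃ a, t = Tm.recc a ∧ Typing [] .P (Tm.recc a) (.arrow A θ' B) ∧
        ∀ j, j < k → ∀ v, v ∈ Vint j θ' A →
          Typing [] .P (subst2 a v (Tm.recc a)) B ∧
          ∀ i, i ≤ j → ∀ w, StepN i (subst2 a v (Tm.recc a)) w → IsValue w →
            w ∈ Vint (j - i) .P B}
  | .mu _, .L => ∅
  | .mu A, .P =>
      {t | ∃ v, t = Tm.roll v ∧ Typing [] .P (Tm.roll v) (.mu A) ∧
        ∀ j, j < k → v ∈ Vint j .P (tsubst0 (.mu A) A)}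
  | .tvar _, _ => ∅
termination_by (k, A.size)
decreasing_by
  all_goals simp only [Prod.lex_def, Ty.size, true_and, eq_self_iff_true]
  all_goals omega

/-- The step-indexed computational interpretation C[[A]]^θ_k. -/
def Cint (k : ℕ) (θ : Frag) (A : Ty) : Set Tm :=
  match θ with
  | .P => {a | Typing [] .P a A ∧
      ∀ j, j ≤ k → ∀ v, StepN j a v → IsValue v → v ∈ Vint (k - j) .P A}
  | .L => {a | Typing [] .L a A ∧
      ∃ v, StepStar a v ∧ IsValue v ∧ v ∈ Vint k .L A}

/-!
A plain, non-step-indexed logical relation suffices. In the logical fragment a value of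
`A →^θ B` is an abstraction sending semantic arguments to terms that normalize to semantic
results; in the programmatic fragment function types, recursive types and type variables are
interpreted by all terms, so neither `rec` nor `μ` has to be tamed and the relation is
defined by structural recursion on types. A programmatic term is only constrained once it is
a value; that is all the two rules importing programmatic values into the logical fragment
need, because on first-order types the two readings agree and under `box v : A @ P` only the
programmatic reading is asked for. The fundamental lemma for substitutions by semantic
values, at the identity substitution, gives normalization.
-/

namespace Tm

theorem liftR_comp (ρ ρ' : ℕ → ℕ) :
    (fun n => liftR ρ' (liftR ρ n)) = liftR (fun n => ρ' (ρ n)) := by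
  funext n; cases n <;> rfl

theorem rename_rename (ρ ρ' : ℕ → ℕ) (a : Tm) :
    (a.rename ρ).rename ρ' = a.rename (fun n => ρ' (ρ n)) := by
  induction a generalizing ρ ρ' <;> simp only [rename, *, liftR_comp]

theorem liftS_liftR (σ : ℕ → Tm) (ρ : ℕ → ℕ) :
    (fun n => liftS σ (liftR ρ n)) = liftS (fun n => σ (ρ n)) := by
  funext n; cases n <;> rfl

theorem rename_subst (ρ : ℕ → ℕ) (σ : ℕ → Tm) (a : Tm) :
    (a.rename ρ).subst σ = a.subst (fun n => σ (ρ n)) := by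
  induction a generalizing ρ σ <;> simp only [rename, subst, *, liftS_liftR]

theorem liftS_rename (σ : ℕ → Tm) (ρ : ℕ → ℕ) :
    (fun n => (liftS σ n).rename (liftR ρ)) = liftS (fun n => (σ n).rename ρ) := by
  funext n; cases n with
  | zero => rfl
  | succ n => simp only [liftS, rename_rename]; rfl

theorem subst_rename (σ : ℕ → Tm) (ρ : ℕ → ℕ) (a : Tm) :
    (a.subst σ).rename ρ = a.subst (fun n => (σ n).rename ρ) := by
  induction a generalizing σ ρ <;> simp only [rename, subst, *, liftS_rename]

theorem liftS_subst (σ τ : ℕ → Tm) :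
    (fun n => (liftS σ n).subst (liftS τ)) = liftS (fun n => (σ n).subst τ) := by
  funext n; cases n with
  | zero => rfl
  | succ n => simp only [liftS, rename_subst, subst_rename]

theorem subst_subst (σ τ : ℕ → Tm) (a : Tm) :
    (a.subst σ).subst τ = a.subst (fun n => (σ n).subst τ) := by
  induction a generalizing σ τ <;> simp only [subst, *, liftS_subst]

theorem liftS_var : liftS var = var := by
  funext n; cases n <;> rfl

theorem subst_var (a : Tm) : a.subst var = a := by
  induction a <;> simp only [subst, *, liftS_var]

end Tm

def scons (w : Tm) (σ : ℕ → Tm) : ℕ → Tm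
  | 0 => w
  | n+1 => σ n

theorem subst1_subst_liftS (a : Tm) (σ : ℕ → Tm) (w : Tm) :
    subst1 (a.subst (Tm.liftS σ)) w = a.subst (scons w σ) := by
  rw [subst1, Tm.subst_subst]
  congr 1; funext n
  cases n with
  | zero => rfl
  | succ n => simp only [Tm.liftS, Tm.rename_subst]; exact Tm.subst_var (σ n)

namespace IsValue

theorem subst {v : Tm} (h : IsValue v) {σ : ℕ → Tm} (hσ : ∀ n, IsValue (σ n)) :
    IsValue (v.subst σ) := by
  induction h with
  | var n => exact hσ n
  | _ => constructor <;> assumption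

theorem of_box {v : Tm} : IsValue (.box v) → IsValue v
  | .box h => h

theorem of_inl {v : Tm} : IsValue (.inl v) → IsValue v
  | .inl h => h

theorem of_inr {v : Tm} : IsValue (.inr v) → IsValue v
  | .inr h => h

theorem not_step {v b : Tm} (h : IsValue v) : ¬ Step v b := by
  induction h generalizing b <;> intro hs <;> cases hs <;> simp_all

theorem stepStar_eq {v u : Tm} (h : IsValue v) : StepStar v u → u = v
  | .refl _ => rfl
  | .step hs _ => absurd hs h.not_step

end IsValue

namespace StepStar

theorem trans {a b c : Tm} (h₁ : StepStar a b) (h₂ : StepStar b c) : StepStar a c := by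
  induction h₁ with
  | refl => exact h₂
  | step hs _ ih => exact .step hs (ih h₂)

theorem lift {f : Tm → Tm} (hf : ∀ {a b}, Step a b → Step (f a) (f b)) {a b : Tm}
    (h : StepStar a b) : StepStar (f a) (f b) := by
  induction h with
  | refl => exact .refl _
  | step hs _ ih => exact .step (hf hs) ih

theorem box_inv {a t : Tm} (h : StepStar (.box a) t) (ht : IsValue t) :
    ∃ w, t = .box w ∧ StepStar a w ∧ IsValue w := by
  generalize hb : Tm.box a = b at h
  induction h generalizing a with
  | refl => subst hb; exact ⟨a, rfl, .refl _, ht.of_box⟩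
  | step hs _ ih =>
      subst hb
      cases hs with
      | box hs =>
          obtain ⟨w, rfl, haw, hw⟩ := ih ht rfl
          exact ⟨w, rfl, .step hs haw, hw⟩

end StepStar

def ValSem : Ty → Frag → Tm → Prop
  | .unit, _, v => v = .unit
  | .sum A B, θ, v => (∃ w, v = .inl w ∧ ValSem A θ w) ∨ (∃ w, v = .inr w ∧ ValSem B θ w)
  | .at_ A θ, _, v => ∃ w, v = .box w ∧ ValSem A θ w
  | .arrow A θ B, .L, v => ∃ a, v = .lam a ∧ ∀ w, IsValue w → ValSem A θ w →
      ∃ u, StepStar (subst1 a w) u ∧ IsValue u ∧ ValSem B .L u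
  | _, .P, _ => True
  | _, .L, _ => False

def TmSem : Frag → Ty → Tm → Prop
  | .L, A, a => ∃ u, StepStar a u ∧ IsValue u ∧ ValSem A .L u
  | .P, A, a => IsValue a → ValSem A .P a

def SemSubst (Γ : Ctx) (σ : ℕ → Tm) : Prop :=
  (∀ n, IsValue (σ n)) ∧ ∀ n θ A, Γ[n]? = some (θ, A) → ValSem A θ (σ n)

namespace ValSem

theorem of_L {A : Ty} {θ : Frag} {v : Tm} (h : ValSem A .L v) : ValSem A θ v := by
  cases θ with
  | L => exact h
  | P =>
      induction A generalizing v with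
      | sum A B ihA ihB =>
          exact h.imp (fun ⟨w, hv, hw⟩ => ⟨w, hv, ihA hw⟩) (fun ⟨w, hv, hw⟩ => ⟨w, hv, ihB hw⟩)
      | unit | at_ => exact h
      | arrow | tvar | mu => trivial

theorem L_of_P {A : Ty} (hA : FO A) {v : Tm} (h : ValSem A .P v) : ValSem A .L v := by
  induction hA generalizing v with
  | sum _ _ ihA ihB =>
      exact h.imp (fun ⟨w, hv, hw⟩ => ⟨w, hv, ihA hw⟩) (fun ⟨w, hv, hw⟩ => ⟨w, hv, ihB hw⟩)
  | unit | at_ => exact h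

end ValSem

namespace TmSem

variable {θ θ' : Frag} {A B C : Ty} {a b b₁ b₂ : Tm}

theorem unit : TmSem θ .unit .unit := by
  cases θ with
  | L => exact ⟨.unit, .refl _, .unit, rfl⟩
  | P => exact fun _ => rfl

theorem toP (h : TmSem .L A a) : TmSem .P A a := by
  obtain ⟨u, hau, -, hu⟩ := h
  intro ha
  rw [ha.stepStar_eq hau] at hu
  exact hu.of_L

theorem boxP (h : TmSem θ A a) : TmSem .P (.at_ A θ) (.box a) := by
  intro ha
  refine ⟨a, rfl, ?_⟩
  cases θ with
  | L =>
      obtain ⟨u, hau, -, hu⟩ := h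
      rwa [ha.of_box.stepStar_eq hau] at hu
  | P => exact h ha.of_box

theorem boxL (h : TmSem .L A a) : TmSem .L (.at_ A θ') (.box a) := by
  obtain ⟨u, hau, hu, hsem⟩ := h
  exact ⟨.box u, hau.lift Step.box, hu.box, u, rfl, hsem.of_L⟩

theorem of_box (h : TmSem .L (.at_ A θ') (.box a)) :
    ∃ w, StepStar a w ∧ IsValue w ∧ ValSem A θ' w := by
  obtain ⟨_, hau, hu, w, rfl, hsem⟩ := h
  obtain ⟨_, ⟨⟩, haw, hw⟩ := hau.box_inv hu
  exact ⟨w, haw, hw, hsem⟩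

theorem inl (h : TmSem θ A a) : TmSem θ (.sum A B) (.inl a) := by
  cases θ with
  | L =>
      obtain ⟨u, hau, hu, hsem⟩ := h
      exact ⟨.inl u, hau.lift Step.inl, hu.inl, .inl ⟨u, rfl, hsem⟩⟩
  | P => exact fun ha => .inl ⟨a, rfl, h ha.of_inl⟩

theorem inr (h : TmSem θ B a) : TmSem θ (.sum A B) (.inr a) := by
  cases θ with
  | L =>
      obtain ⟨u, hau, hu, hsem⟩ := h
      exact ⟨.inr u, hau.lift Step.inr, hu.inr, .inr ⟨u, rfl, hsem⟩⟩
  | P => exact fun ha => .inr ⟨a, rfl, h ha.of_inr⟩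

theorem unbox (ha : TmSem θ (.at_ A θ') a)
    (hb : ∀ w, IsValue w → ValSem A θ' w → TmSem θ B (subst1 b w)) :
    TmSem θ B (.unbox a b) := by
  cases θ with
  | L =>
      obtain ⟨_, haw, hw, w, rfl, hsem⟩ := ha
      obtain ⟨u, hbu, hu, hsem'⟩ := hb w hw.of_box hsem
      exact ⟨u, (haw.lift Step.unbox1).trans (.step (.unbox hw.of_box) hbu), hu, hsem'⟩
  | P => nofun

theorem app (ha : TmSem θ (.arrow A θ' B) a) (hb : TmSem θ (.at_ A θ') (.box b)) :
    TmSem θ B (.app a b) := by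
  cases θ with
  | L =>
      obtain ⟨_, hat, -, t, rfl, ht⟩ := ha
      obtain ⟨w, hbw, hw, hsem⟩ := hb.of_box
      obtain ⟨u, htu, hu, hsem'⟩ := ht w hw hsem
      refine ⟨u, ?_, hu, hsem'⟩
      exact (hat.lift Step.app1).trans
        ((hbw.lift (Step.app2 (.lam t))).trans (.step (.beta hw) htu))
  | P => nofun

theorem case (ha : TmSem θ (.at_ (.sum A B) θ') (.box a))
    (hb₁ : ∀ w, IsValue w → ValSem A θ' w → TmSem θ C (subst1 b₁ w))
    (hb₂ : ∀ w, IsValue w → ValSem B θ' w → TmSem θ C (subst1 b₂ w)) :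
    TmSem θ C (.case a b₁ b₂) := by
  cases θ with
  | L =>
      obtain ⟨_, haw, hw, ⟨w, rfl, hsem⟩ | ⟨w, rfl, hsem⟩⟩ := ha.of_box
      · obtain ⟨u, hbu, hu, hsem'⟩ := hb₁ w hw.of_inl hsem
        exact ⟨u, (haw.lift Step.caseCtx).trans (.step (.caseL hw.of_inl) hbu), hu, hsem'⟩
      · obtain ⟨u, hbu, hu, hsem'⟩ := hb₂ w hw.of_inr hsem
        exact ⟨u, (haw.lift Step.caseCtx).trans (.step (.caseR hw.of_inr) hbu), hu, hsem'⟩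
  | P => nofun

end TmSem

namespace SemSubst

variable {Γ : Ctx} {σ : ℕ → Tm}

theorem cons {θ : Frag} {A : Ty} {w : Tm} (hσ : SemSubst Γ σ) (hw : IsValue w)
    (hsem : ValSem A θ w) : SemSubst ((θ, A) :: Γ) (scons w σ) := by
  refine ⟨fun n => ?_, fun n θ' A' hn => ?_⟩
  · cases n with
    | zero => exact hw
    | succ n => exact hσ.1 n
  · cases n with
    | zero => cases hn; exact hsem
    | succ n => exact hσ.2 n θ' A' hn

theorem tmSem_var {θ : Frag} {A : Ty} {n : ℕ} (hσ : SemSubst Γ σ) (hn : Γ[n]? = some (θ, A)) :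
    TmSem θ A (σ n) := by
  cases θ with
  | L => exact ⟨σ n, .refl _, hσ.1 n, hσ.2 n _ _ hn⟩
  | P => exact fun _ => hσ.2 n _ _ hn

theorem tmSem_subst1 {θ θ' : Frag} {A B : Ty} {b w : Tm} (hσ : SemSubst Γ σ)
    (hb : ∀ {τ}, SemSubst ((θ', A) :: Γ) τ → TmSem θ B (b.subst τ))
    (hw : IsValue w) (hsem : ValSem A θ' w) :
    TmSem θ B (subst1 (b.subst (Tm.liftS σ)) w) := by
  rw [subst1_subst_liftS]
  exact hb (hσ.cons hw hsem)

end SemSubst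

theorem Typing.fundamental {Γ : Ctx} {θ : Frag} {a : Tm} {A : Ty} (h : Typing Γ θ a A)
    {σ : ℕ → Tm} (hσ : SemSubst Γ σ) : TmSem θ A (a.subst σ) := by
  induction h generalizing σ with
  | tvar hn => exact hσ.tmSem_var hn
  | tlam _ ih => exact ⟨_, .refl _, .lam _, _, rfl, fun _ => hσ.tmSem_subst1 ih⟩
  | trec | troll => exact fun _ => trivial
  | tunroll => nofun
  | tboxP _ ih => exact (ih hσ).boxP
  | tboxL _ ih => exact (ih hσ).boxL
  | tboxLV hv _ ih =>
      have hvσ := hv.subst hσ.1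
      exact ⟨_, .refl _, hvσ.box, _, rfl, ih hσ hvσ⟩
  | tunbox _ _ iha ihb => exact (iha hσ).unbox fun _ => hσ.tmSem_subst1 ihb
  | tapp _ _ iha ihb => exact (iha hσ).app (ihb hσ)
  | tunit => exact .unit
  | tsub _ ih => exact (ih hσ).toP
  | tfoval hv hA _ ih =>
      have hvσ := hv.subst hσ.1
      exact ⟨_, .refl _, hvσ, (ih hσ hvσ).L_of_P hA⟩
  | tinl _ ih => exact (ih hσ).inl
  | tinr _ ih => exact (ih hσ).inr
  | tcase _ _ _ iha ihb₁ ihb₂ =>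
      exact (iha hσ).case (fun _ => hσ.tmSem_subst1 ihb₁) (fun _ => hσ.tmSem_subst1 ihb₂)

/-- Normalization of the logical fragment. -/
theorem normalization {a : Tm} {A : Ty} (h : Typing [] .L a A) :
    ∃ v, IsValue v ∧ StepStar a v := by
  have hid : SemSubst [] Tm.var := ⟨IsValue.var, fun _ _ _ hn => by simp at hn⟩
  obtain ⟨v, hav, hv, -⟩ := Tm.subst_var a ▸ h.fundamental hid
  exact ⟨v, hv, hav⟩
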